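/- Let K be a measurable space, F a real normed vector space, and f ↦ ν_f an energy-measure assignment on (F, K). Let (f_i)_{i∈ℕ} be a sequence in F whose linear span is dense in F, and let (a_i)_{i∈ℕ} be positive reals such that Σ_{i} a_i ν_{f_i}(K) < ∞. Define the finite measure ν = Σ_{i} a_i ν_{f_i}. Then ν is a minimal energy-dominant measure: ν_f ≪ ν for every f ∈ F, and ν ≪ ν' for every σ-finite measure ν' on K satisfying ν_f ≪ ν' for all f ∈ F. -/
import Mathlib


open MeasureTheory

/-- The mutual measure value `ν_{f,g}(B) := (ν_{f+g}(B) − ν_f(B) − ν_g(B))/2`. -/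
noncomputable def mutualEM {F K : Type*} [MeasurableSpace K] [Add F]
    (em : F → Measure K) (f g : F) (B : Set K) : ℝ :=
  ((em (f + g) B).toReal - (em f B).toReal - (em g B).toReal) / 2

/-- An energy-measure assignment on `(F, K)`: each `f : F` is assigned a finite measure `ν_f`
on `K` such that (a) for every measurable `B`, `(f, g) ↦ ν_{f,g}(B)` is a (symmetric) bilinear
form on `F`, and (b) `(√(ν_f B) − √(ν_g B))² ≤ ν_{f−g}(B) ≤ 2‖f − g‖²` for all measurable `B`.
(Symmetry of the mutual form is automatic from its definition.) -/
structure EnergyMeasureAssignment (F K : Type*) [MeasurableSpace K]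
    [NormedAddCommGroup F] [NormedSpace ℝ F] where
  em : F → Measure K
  finite : ∀ f, IsFiniteMeasure (em f)
  add_left : ∀ (f₁ f₂ g : F) (B : Set K), MeasurableSet B →
    mutualEM em (f₁ + f₂) g B = mutualEM em f₁ g B + mutualEM em f₂ g B
  smul_left : ∀ (c : ℝ) (f g : F) (B : Set K), MeasurableSet B →
    mutualEM em (c • f) g B = c * mutualEM em f g B
  sqrt_diff_le : ∀ (f g : F) (B : Set K), MeasurableSet B →
    (Real.sqrt (em f B).toReal - Real.sqrt (em g B).toReal) ^ 2 ≤ (em (f - g) B).toReal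
  le_norm : ∀ (f g : F) (B : Set K), MeasurableSet B →
    (em (f - g) B).toReal ≤ 2 * ‖f - g‖ ^ 2

/-- `ν` is a minimal energy-dominant measure: it is σ-finite, dominates every energy measure,
and is absolutely continuous with respect to any other σ-finite measure that does so. -/
def IsMinimalEnergyDominant {F K : Type*} [MeasurableSpace K]
    [NormedAddCommGroup F] [NormedSpace ℝ F]
    (E : EnergyMeasureAssignment F K) (ν : Measure K) : Prop :=
  SigmaFinite ν ∧ (∀ f, E.em f ≪ ν) ∧
    ∀ ν' : Measure K, SigmaFinite ν' → (∀ f, E.em f ≪ ν') → ν ≪ ν'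

/-- Lemma 2.2 of the paper: if the linear span of `(f i)` is dense in `F` and `a i > 0` with
`Σ a_i ν_{f_i}(K) < ∞`, then `ν = Σ a_i ν_{f_i}` is a minimal energy-dominant measure. -/
theorem stmt8 {F K : Type*} [MeasurableSpace K] [NormedAddCommGroup F] [NormedSpace ℝ F]
    (E : EnergyMeasureAssignment F K)
    (f : ℕ → F) (hdense : Dense (Submodule.span ℝ (Set.range f) : Set F))
    (a : ℕ → ℝ) (ha : ∀ i, 0 < a i)
    (hsum : Summable fun i => a i * (E.em (f i) Set.univ).toReal) :
    IsMinimalEnergyDominant E (Measure.sum fun i => ENNReal.ofReal (a i) • E.em (f i)) := by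
  set ν := Measure.sum fun i => ENNReal.ofReal (a i) • E.em (f i) with hν
  -- Key: if all ν_{f i}(B) = 0 then ν_g(B) = 0 for every g.
  have key : ∀ B : Set K, MeasurableSet B → (∀ i, E.em (f i) B = 0) → ∀ g, E.em g B = 0 := by
    intro B hB h0 g
    have hQnn : ∀ h : F, 0 ≤ (E.em h B).toReal := fun h => ENNReal.toReal_nonneg
    have hQ0 : (E.em (0 : F) B).toReal = 0 := by
      have h1 := E.le_norm 0 0 B hB
      simp only [sub_zero, norm_zero] at h1
      have : (E.em (0 : F) B).toReal ≤ 0 := by nlinarith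
      exact le_antisymm this (hQnn 0)
    have hzero : ∀ h : F, (E.em h B).toReal = 0 → E.em h B = 0 := by
      intro h hh
      haveI := E.finite h
      have hne : E.em h B ≠ ⊤ := measure_ne_top _ _
      exact (ENNReal.toReal_eq_zero_iff _).mp hh |>.resolve_right hne
    -- the set of g with vanishing mutual form against everything is a submodule
    let p : Submodule ℝ F :=
      { carrier := {g : F | ∀ h : F, mutualEM E.em g h B = 0}
        add_mem' := by
          intro x y hx hy h
          rw [E.add_left x y h B hB, hx h, hy h]; ring
        zero_mem' := by
          intro h
          simp only [mutualEM, zero_add, hQ0]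
          ring
        smul_mem' := by
          intro c g hg h
          rw [E.smul_left c g h B hB, hg h]; ring }
    have hfp : ∀ i, f i ∈ p := by
      intro i h
      have hQi : (E.em (f i) B).toReal = 0 := by rw [h0 i]; simp
      -- from the bound, ν_{f i + h}(B) = ν_h(B)
      have h1 := E.sqrt_diff_le (f i + h) h B hB
      rw [add_sub_cancel_right, hQi] at h1
      have h2 : Real.sqrt (E.em (f i + h) B).toReal = Real.sqrt (E.em h B).toReal := by
        have hnn := sq_nonneg (Real.sqrt (E.em (f i + h) B).toReal -
          Real.sqrt (E.em h B).toReal)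
        have : (Real.sqrt (E.em (f i + h) B).toReal -
            Real.sqrt (E.em h B).toReal) ^ 2 = 0 := le_antisymm h1 hnn
        have := pow_eq_zero_iff (n := 2) (by norm_num) |>.mp this
        linarith
      have h3 : (E.em (f i + h) B).toReal = (E.em h B).toReal := by
        have e1 := Real.sq_sqrt (hQnn (f i + h))
        have e2 := Real.sq_sqrt (hQnn h)
        rw [← e1, ← e2, h2]
      simp only [mutualEM, h3, hQi]
      ring
    have hspan : (Submodule.span ℝ (Set.range f)) ≤ p :=
      Submodule.span_le.mpr (by rintro _ ⟨i, rfl⟩; exact hfp i)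
    -- every element of the span has vanishing energy measure on B
    have hQspan : ∀ g ∈ Submodule.span ℝ (Set.range f), (E.em g B).toReal = 0 := by
      intro g hg
      have hgp : ∀ h : F, mutualEM E.em g h B = 0 := hspan hg
      have h1 : mutualEM E.em ((-1 : ℝ) • g) g B = (-1) * mutualEM E.em g g B :=
        E.smul_left (-1) g g B hB
      rw [hgp g] at h1
      have hneg : (-1 : ℝ) • g = -g := by simp
      rw [hneg] at h1
      simp only [mutualEM, neg_add_cancel, hQ0] at h1
      have := hQnn g
      have := hQnn (-g)
      linarith [h1]
    -- density: extend to all of F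
    have hQall : (E.em g B).toReal = 0 := by
      have hle : ∀ ε : ℝ, 0 < ε → Real.sqrt (E.em g B).toReal ≤ Real.sqrt 2 * ε := by
        intro ε hε
        obtain ⟨y, hy_mem, hy⟩ := hdense.exists_dist_lt g hε
        have hQy : (E.em y B).toReal = 0 := hQspan y hy_mem
        have h1 := E.sqrt_diff_le g y B hB
        have h2 := E.le_norm g y B hB
        rw [hQy, Real.sqrt_zero, sub_zero] at h1
        have h3 : Real.sqrt (E.em g B).toReal ^ 2 ≤ 2 * ‖g - y‖ ^ 2 := le_trans h1 h2
        have h4 : Real.sqrt (E.em g B).toReal ≤ Real.sqrt (2 * ‖g - y‖ ^ 2) := by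
          have := Real.sqrt_le_sqrt h3
          rwa [Real.sqrt_sq (Real.sqrt_nonneg _)] at this
        have h5 : Real.sqrt (2 * ‖g - y‖ ^ 2) = Real.sqrt 2 * ‖g - y‖ := by
          rw [Real.sqrt_mul (by norm_num : (0:ℝ) ≤ 2), Real.sqrt_sq (norm_nonneg _)]
        have h6 : ‖g - y‖ ≤ ε := by
          rw [← dist_eq_norm]; exact le_of_lt hy
        calc Real.sqrt (E.em g B).toReal ≤ Real.sqrt 2 * ‖g - y‖ := by rw [← h5]; exact h4
          _ ≤ Real.sqrt 2 * ε := by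
              exact mul_le_mul_of_nonneg_left h6 (Real.sqrt_nonneg 2)
      have hs0 : Real.sqrt (E.em g B).toReal ≤ 0 := by
        apply le_of_forall_pos_le_add
        intro ε hε
        have h2pos : (0:ℝ) < Real.sqrt 2 := Real.sqrt_pos.mpr (by norm_num)
        have := hle (ε / Real.sqrt 2) (div_pos hε h2pos)
        rw [mul_div_cancel₀ _ (ne_of_gt h2pos)] at this
        linarith
      have := Real.sqrt_nonneg (E.em g B).toReal
      have hs : Real.sqrt (E.em g B).toReal = 0 := le_antisymm hs0 this
      have := Real.sq_sqrt (hQnn g)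
      rw [hs] at this
      simpa using this.symm
    exact hzero g hQall
  -- ν is a finite measure
  haveI hfinν : IsFiniteMeasure ν := by
    constructor
    rw [hν, Measure.sum_apply _ MeasurableSet.univ]
    have heq : ∀ i, (ENNReal.ofReal (a i) • E.em (f i)) Set.univ =
        ENNReal.ofReal (a i * (E.em (f i) Set.univ).toReal) := by
      intro i
      haveI := E.finite (f i)
      rw [Measure.smul_apply, smul_eq_mul, ENNReal.ofReal_mul (le_of_lt (ha i)),
        ENNReal.ofReal_toReal (measure_ne_top _ _)]
    simp_rw [heq]
    rw [← ENNReal.ofReal_tsum_of_nonneg (fun i => mul_nonneg (le_of_lt (ha i))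
      ENNReal.toReal_nonneg) hsum]
    exact ENNReal.ofReal_lt_top
  refine ⟨inferInstance, ?_, ?_⟩
  · -- ν_g ≪ ν
    intro g
    apply Measure.AbsolutelyContinuous.mk
    intro B hB hνB
    rw [hν, Measure.sum_apply _ hB] at hνB
    have h0 : ∀ i, E.em (f i) B = 0 := by
      intro i
      have := ENNReal.tsum_eq_zero.mp hνB i
      rw [Measure.smul_apply, smul_eq_mul] at this
      rcases mul_eq_zero.mp this with h | h
      · exact absurd h (by simp [ENNReal.ofReal_eq_zero, not_le, ha i])
      · exact h
    exact key B hB h0 g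
  · -- minimality
    intro ν' _ hν'
    apply Measure.AbsolutelyContinuous.mk
    intro B hB hB0
    rw [hν, Measure.sum_apply _ hB]
    have : ∀ i, (ENNReal.ofReal (a i) • E.em (f i)) B = 0 := by
      intro i
      rw [Measure.smul_apply, smul_eq_mul, hν' (f i) hB0, mul_zero]
    simp [this]
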